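/- arXiv:1310.1286 — 2 statements merged into one kernel-verified Lean document; each statement's English description precedes it below -/
import Mathlib

section
/- Let n ≥ 1 and let (a_k)_{k=1}^n and (b_k)_{k=1}^n be positive non-increasing sequences with 0 < a ≤ a_k ≤ A < ∞ and 0 < b ≤ b_k ≤ B < ∞ for all k, and assume in addition that the sequence (a_k/b_k)_{k=1}^n is monotone (non-increasing or non-decreasing). Then (∑_{k=1}^n (-1)^{k+1} a_k²) · (∑_{k=1}^n (-1)^{k+1} b_k²) ≤ c² · (∑_{k=1}^n (-1)^{k+1} a_k b_k)², where c = (1/2) · max{A/a + a/A, B/b + b/B}. -/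
/-!
Write `S f = f 1 - f 2 + ⋯ ± f n`, which is non-negative when `f` is non-negative and
non-increasing. Assume `a / b` is non-increasing (otherwise swap `a` and `b`) and let
`m = aₙ / bₙ ≤ p = a₁ / b₁` be the extreme ratios. The parabola `g r = (r - m) (2p - m - r)` has
its vertex at `p`, so it is non-negative and increasing on `[m, p]`; hence
`bₖ² g (aₖ / bₖ) = (aₖ - m bₖ) ((2p - m) bₖ - aₖ)` is non-negative and non-increasing in `k`.
Its alternating sum is therefore non-negative, i.e. `S(a²) + m (2p - m) S(b²) ≤ 2p S(ab)`, and
AM-GM turns this into `m (2p - m) S(a²) S(b²) ≤ p² S(ab)²`. Finally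
`p² ≤ ((ρ + 1/ρ) / 2)² m (2p - m)` as soon as `p ≤ ρ m`, and the bounds on `a` and `b` give
`p ≤ (A / aL) m`.
-/

open Finset

def altSum {R : Type*} [Ring R] (n : ℕ) (f : ℕ → R) : R :=
  ∑ k ∈ Icc 1 n, (-1 : R) ^ (k + 1) * f k

theorem antitoneOn_Icc_of_succ_le {α : Type*} [Preorder α] {f : ℕ → α} {m n : ℕ}
    (hf : ∀ k, m ≤ k → k < n → f (k + 1) ≤ f k) : AntitoneOn f (Set.Icc m n) :=
  antitoneOn_of_succ_le Set.ordConnected_Icc fun k _ hk hk1 => by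
    rw [Order.succ_eq_add_one] at hk1 ⊢
    exact hf k hk.1 hk1.2

theorem altSum_nonneg_of_antitoneOn {R : Type*} [CommRing R] [LinearOrder R]
    [IsStrictOrderedRing R] {n : ℕ} {f : ℕ → R} (hf : AntitoneOn f (Set.Icc 1 n))
    (hf0 : ∀ k ∈ Set.Icc 1 n, 0 ≤ f k) : 0 ≤ altSum n f := by
  suffices ∀ m ≤ n, 0 ≤ altSum m f ∧ (Odd m → f m ≤ altSum m f) from (this n le_rfl).1
  intro m hm
  induction m with
  | zero => simp [altSum]
  | succ m ih =>
    obtain ⟨ih_nonneg, ih_odd⟩ := ih (by omega)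
    have hsign : (-1 : R) ^ (m + 1 + 1) = (-1) ^ m := by ring
    rw [altSum, sum_Icc_succ_top (by omega), ← altSum, hsign]
    rcases Nat.even_or_odd m with hm_even | hm_odd
    · have := hf0 (m + 1) ⟨by omega, hm⟩
      rw [hm_even.neg_one_pow]
      constructor <;> intros <;> linarith
    · have hstep : f (m + 1) ≤ f m := hf ⟨hm_odd.pos, by omega⟩ ⟨by omega, hm⟩ (by omega)
      have := ih_odd hm_odd
      rw [hm_odd.neg_one_pow]
      exact ⟨by linarith, fun h => absurd hm_odd (Nat.odd_add_one.mp h)⟩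

variable {K : Type*} [Field K] [LinearOrder K] [IsStrictOrderedRing K]

theorem four_mul_mul_le_sq_of_add_mul_le {x y q z : K} (hx : 0 ≤ x) (hy : 0 ≤ y) (hq : 0 ≤ q)
    (h : x + q * y ≤ z) : 4 * q * (x * y) ≤ z ^ 2 :=
  calc 4 * q * (x * y) ≤ (x + q * y) ^ 2 := by nlinarith [sq_nonneg (x - q * y)]
    _ ≤ z ^ 2 := pow_le_pow_left₀ (by positivity) h 2

theorem altSum_sq_add_le {n : ℕ} {a b : ℕ → K} {m p : K}
    (hb : ∀ k ∈ Set.Icc 1 n, 0 < b k) (hb_anti : AntitoneOn b (Set.Icc 1 n))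
    (hr_anti : AntitoneOn (fun k => a k / b k) (Set.Icc 1 n))
    (hr : ∀ k ∈ Set.Icc 1 n, a k / b k ∈ Set.Icc m p) :
    altSum n (a ^ 2) + m * (2 * p - m) * altSum n (b ^ 2) ≤ 2 * p * altSum n (a * b) := by
  set g : K → K := fun r => (r - m) * (2 * p - m - r)
  have hg_nonneg : ∀ r ∈ Set.Icc m p, 0 ≤ g r := fun r hr =>
    mul_nonneg (by linarith [hr.1]) (by linarith [hr.1, hr.2])
  have hg_mono : MonotoneOn g (Set.Icc m p) := fun r hr s hs hrs => by
    nlinarith [hr.2, hs.2]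
  have hG_anti : AntitoneOn (fun k => b k ^ 2 * g (a k / b k)) (Set.Icc 1 n) :=
    fun k hk l hl hkl =>
      calc b l ^ 2 * g (a l / b l) ≤ b l ^ 2 * g (a k / b k) :=
            mul_le_mul_of_nonneg_left (hg_mono (hr l hl) (hr k hk) (hr_anti hk hl hkl))
              (sq_nonneg _)
        _ ≤ b k ^ 2 * g (a k / b k) :=
            mul_le_mul_of_nonneg_right (pow_le_pow_left₀ (hb l hl).le (hb_anti hk hl hkl) 2)
              (hg_nonneg _ (hr k hk))
  have hG_sum : altSum n (fun k => b k ^ 2 * g (a k / b k)) =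
      2 * p * altSum n (a * b) - altSum n (a ^ 2) - m * (2 * p - m) * altSum n (b ^ 2) := by
    simp only [altSum, mul_sum, ← sum_sub_distrib]
    refine sum_congr rfl fun k hk => ?_
    have := (hb k (mem_Icc.mp hk)).ne'
    simp only [g, Pi.pow_apply, Pi.mul_apply]
    field_simp
    ring
  linarith [altSum_nonneg_of_antitoneOn hG_anti fun k hk =>
    mul_nonneg (sq_nonneg (b k)) (hg_nonneg _ (hr k hk))]

theorem sq_le_half_add_inv_sq_mul {m p ρ : K} (hm : 0 < m) (hmp : m ≤ p) (hpρ : p ≤ ρ * m) :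
    p ^ 2 ≤ (1 / 2 * (ρ + 1 / ρ)) ^ 2 * (m * (2 * p - m)) := by
  have hρ : 1 ≤ ρ := le_of_mul_le_mul_right (by linarith) hm
  have h₁ : 0 ≤ ρ ^ 2 * m - (2 * p - m) := by
    nlinarith [sq_nonneg (p - m), mul_le_mul hpρ hpρ (by linarith) (by positivity)]
  have h₂ : 0 ≤ ρ ^ 2 * (2 * p - m) - m := by nlinarith
  have key : (ρ ^ 2 + 1) ^ 2 * (m * (2 * p - m)) - 4 * ρ ^ 2 * p ^ 2 =
      (ρ ^ 2 * m - (2 * p - m)) * (ρ ^ 2 * (2 * p - m) - m) := by ring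
  have hc : (1 / 2 * (ρ + 1 / ρ)) ^ 2 = (ρ ^ 2 + 1) ^ 2 / (4 * ρ ^ 2) := by
    field_simp
    ring
  rw [hc, div_mul_eq_mul_div, le_div_iff₀ (by positivity)]
  linarith [mul_nonneg h₁ h₂]

theorem altSum_sq_mul_altSum_sq_le {n : ℕ} (hn : 1 ≤ n) {a b : ℕ → K} {ρ : K}
    (ha : ∀ k ∈ Set.Icc 1 n, 0 < a k) (hb : ∀ k ∈ Set.Icc 1 n, 0 < b k)
    (ha_anti : AntitoneOn a (Set.Icc 1 n)) (hb_anti : AntitoneOn b (Set.Icc 1 n))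
    (hr_anti : AntitoneOn (fun k => a k / b k) (Set.Icc 1 n))
    (hρ : a 1 / b 1 ≤ ρ * (a n / b n)) :
    altSum n (a ^ 2) * altSum n (b ^ 2) ≤ (1 / 2 * (ρ + 1 / ρ)) ^ 2 * altSum n (a * b) ^ 2 := by
  have h1 : 1 ∈ Set.Icc 1 n := ⟨le_rfl, hn⟩
  have hn' : n ∈ Set.Icc 1 n := ⟨hn, le_rfl⟩
  set m := a n / b n
  set p := a 1 / b 1
  have hr : ∀ k ∈ Set.Icc 1 n, a k / b k ∈ Set.Icc m p := fun k hk =>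
    ⟨hr_anti hk hn' hk.2, hr_anti h1 hk hk.1⟩
  have hm : 0 < m := div_pos (ha n hn') (hb n hn')
  have hmp : m ≤ p := (hr 1 h1).1
  have hq : 0 < m * (2 * p - m) := mul_pos hm (by linarith)
  have hSa : 0 ≤ altSum n (a ^ 2) := altSum_nonneg_of_antitoneOn
    (fun k _ l hl hkl => pow_le_pow_left₀ (ha l hl).le (ha_anti ‹_› hl hkl) 2)
    fun k _ => sq_nonneg (a k)
  have hSb : 0 ≤ altSum n (b ^ 2) := altSum_nonneg_of_antitoneOn
    (fun k _ l hl hkl => pow_le_pow_left₀ (hb l hl).le (hb_anti ‹_› hl hkl) 2)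
    fun k _ => sq_nonneg (b k)
  have hamgm := four_mul_mul_le_sq_of_add_mul_le hSa hSb hq.le
    (altSum_sq_add_le hb hb_anti hr_anti hr)
  refine le_of_mul_le_mul_left ?_ hq
  calc m * (2 * p - m) * (altSum n (a ^ 2) * altSum n (b ^ 2))
      ≤ p ^ 2 * altSum n (a * b) ^ 2 := by linarith
    _ ≤ (1 / 2 * (ρ + 1 / ρ)) ^ 2 * (m * (2 * p - m)) * altSum n (a * b) ^ 2 :=
        mul_le_mul_of_nonneg_right (sq_le_half_add_inv_sq_mul hm hmp hρ) (sq_nonneg _)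
    _ = m * (2 * p - m) * ((1 / 2 * (ρ + 1 / ρ)) ^ 2 * altSum n (a * b) ^ 2) := by ring

theorem altSum_sq_mul_altSum_sq_le_of_bounds {n : ℕ} (hn : 1 ≤ n) {a b : ℕ → K} {aL A : K}
    (haL : 0 < aL) (ha_bdd : ∀ k ∈ Set.Icc 1 n, aL ≤ a k ∧ a k ≤ A)
    (hb : ∀ k ∈ Set.Icc 1 n, 0 < b k)
    (ha_anti : AntitoneOn a (Set.Icc 1 n)) (hb_anti : AntitoneOn b (Set.Icc 1 n))
    (hr_anti : AntitoneOn (fun k => a k / b k) (Set.Icc 1 n)) :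
    altSum n (a ^ 2) * altSum n (b ^ 2) ≤
      (1 / 2 * (A / aL + aL / A)) ^ 2 * altSum n (a * b) ^ 2 := by
  have h1 : 1 ∈ Set.Icc 1 n := ⟨le_rfl, hn⟩
  have hn' : n ∈ Set.Icc 1 n := ⟨hn, le_rfl⟩
  have hρ : a 1 / b 1 ≤ A / aL * (a n / b n) :=
    calc a 1 / b 1 ≤ A / b n :=
          div_le_div₀ (by linarith [ha_bdd 1 h1]) (ha_bdd 1 h1).2 (hb n hn') (hb_anti h1 hn' hn)
      _ = A / aL * (aL / b n) := by field_simp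
      _ ≤ A / aL * (a n / b n) := by
          have : 0 ≤ A / aL := div_nonneg (by linarith [ha_bdd 1 h1]) haL.le
          gcongr
          · exact (hb n hn').le
          · exact (ha_bdd n hn').1
  simpa only [one_div_div] using altSum_sq_mul_altSum_sq_le hn
    (fun k hk => haL.trans_le (ha_bdd k hk).1) hb ha_anti hb_anti hr_anti hρ

/-- Proposition 1: Cauchy-type inequality with alternating signs. -/
theorem alternating_cauchy (n : ℕ) (hn : 1 ≤ n) (a b : ℕ → ℝ) (aL A bL B : ℝ)
    (haL : 0 < aL) (hbL : 0 < bL)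
    (ha_mono : ∀ k, 1 ≤ k → k < n → a (k + 1) ≤ a k)
    (hb_mono : ∀ k, 1 ≤ k → k < n → b (k + 1) ≤ b k)
    (ha_bdd : ∀ k, 1 ≤ k → k ≤ n → aL ≤ a k ∧ a k ≤ A)
    (hb_bdd : ∀ k, 1 ≤ k → k ≤ n → bL ≤ b k ∧ b k ≤ B)
    (hab_mono :
      (∀ k, 1 ≤ k → k < n → a (k + 1) / b (k + 1) ≤ a k / b k) ∨
      (∀ k, 1 ≤ k → k < n → a k / b k ≤ a (k + 1) / b (k + 1))) :
    (∑ k ∈ Finset.Icc 1 n, (-1 : ℝ) ^ (k + 1) * a k ^ 2) *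
      (∑ k ∈ Finset.Icc 1 n, (-1 : ℝ) ^ (k + 1) * b k ^ 2) ≤
    ((1 / 2) * max (A / aL + aL / A) (B / bL + bL / B)) ^ 2 *
      (∑ k ∈ Finset.Icc 1 n, (-1 : ℝ) ^ (k + 1) * (a k * b k)) ^ 2 := by
  have ha_bdd' : ∀ k ∈ Set.Icc 1 n, aL ≤ a k ∧ a k ≤ A := fun k hk => ha_bdd k hk.1 hk.2
  have hb_bdd' : ∀ k ∈ Set.Icc 1 n, bL ≤ b k ∧ b k ≤ B := fun k hk => hb_bdd k hk.1 hk.2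
  have ha : ∀ k ∈ Set.Icc 1 n, 0 < a k := fun k hk => haL.trans_le (ha_bdd' k hk).1
  have hb : ∀ k ∈ Set.Icc 1 n, 0 < b k := fun k hk => hbL.trans_le (hb_bdd' k hk).1
  have hA : 0 < A := (ha 1 ⟨le_rfl, hn⟩).trans_le (ha_bdd' 1 ⟨le_rfl, hn⟩).2
  have hB : 0 < B := (hb 1 ⟨le_rfl, hn⟩).trans_le (hb_bdd' 1 ⟨le_rfl, hn⟩).2
  have ha_anti := antitoneOn_Icc_of_succ_le ha_mono
  have hb_anti := antitoneOn_Icc_of_succ_le hb_mono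
  rcases hab_mono with hr_anti | hr_mono
  · calc _ ≤ (1 / 2 * (A / aL + aL / A)) ^ 2 * altSum n (a * b) ^ 2 :=
          altSum_sq_mul_altSum_sq_le_of_bounds hn haL ha_bdd' hb ha_anti hb_anti
            (antitoneOn_Icc_of_succ_le hr_anti)
      _ ≤ _ := by gcongr (1 / 2 * ?_) ^ 2 * _; exact le_max_left _ _
  · have hr_anti : AntitoneOn (fun k => b k / a k) (Set.Icc 1 n) :=
      antitoneOn_Icc_of_succ_le fun k hk hkn => by
        rw [← inv_div, ← inv_div (a k)]
        exact inv_anti₀ (div_pos (ha k ⟨hk, hkn.le⟩) (hb k ⟨hk, hkn.le⟩)) (hr_mono k hk hkn)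
    calc _ = altSum n (b ^ 2) * altSum n (a ^ 2) := mul_comm _ _
      _ ≤ (1 / 2 * (B / bL + bL / B)) ^ 2 * altSum n (b * a) ^ 2 :=
          altSum_sq_mul_altSum_sq_le_of_bounds hn hbL hb_bdd' ha hb_anti ha_anti hr_anti
      _ ≤ _ := by rw [mul_comm b a]; gcongr (1 / 2 * ?_) ^ 2 * _; exact le_max_right _ _
end

section
/- Let n ≥ 1, let p ≥ 1, and let (a_k)_{k=1}^n and (b_k)_{k=1}^n be non-negative non-increasing sequences of real numbers. Then (∑_{k=1}^n (-1)^{k+1} a_k^p)^{1/p} + (∑_{k=1}^n (-1)^{k+1} b_k^p)^{1/p} ≤ 2^{1 − 1/p} · (∑_{k=1}^n (-1)^{k+1} (a_k + b_k)^p)^{1/p}. -/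
/-! The map `t ↦ t ^ p` is convex on `[0, ∞)` and vanishes at `0`, so its superadditivity defect
`(x + y) ^ p - x ^ p - y ^ p` is non-negative and non-decreasing in each variable. Hence
`k ↦ (a k + b k) ^ p - a k ^ p - b k ^ p` is again non-negative and non-increasing, so its
alternating sum is non-negative: `A + B ≤ C` for the three alternating sums of the theorem.
Concavity of `t ↦ t ^ (1 / p)` gives `A ^ (1/p) + B ^ (1/p) ≤ 2 ^ (1 - 1/p) * (A + B) ^ (1/p)`. -/

open Finset Set

lemma le_sum_Icc_alternating {n : ℕ} {c : ℕ → ℝ} (hc : ∀ k, 1 ≤ k → k < n → c (k + 1) ≤ c k) :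
    ∀ m ≤ n, (if Odd m then c m else 0) ≤ ∑ k ∈ Icc 1 m, (-1 : ℝ) ^ (k + 1) * c k := by
  intro m hm
  induction m with
  | zero => simp
  | succ m ih =>
    rw [sum_Icc_succ_top (by omega)]
    specialize ih (by omega)
    rcases Nat.even_or_odd m with hm' | hm'
    · rw [if_neg (Nat.not_odd_iff_even.2 hm')] at ih
      rw [if_pos hm'.add_one, (hm'.add_one.add_one).neg_one_pow]
      linarith
    · rw [if_pos hm'] at ih
      rw [if_neg (Nat.not_odd_iff_even.2 hm'.add_one), hm'.add_one.add_one.neg_one_pow]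
      have := hc m hm'.pos (by omega)
      linarith

lemma sum_Icc_alternating_nonneg {n : ℕ} {c : ℕ → ℝ} (h0 : ∀ k, 1 ≤ k → k ≤ n → 0 ≤ c k)
    (hc : ∀ k, 1 ≤ k → k < n → c (k + 1) ≤ c k) :
    0 ≤ ∑ k ∈ Icc 1 n, (-1 : ℝ) ^ (k + 1) * c k := by
  refine le_trans ?_ (le_sum_Icc_alternating hc n le_rfl)
  split_ifs with hn
  · exact h0 n hn.pos le_rfl
  · rfl

section Convex

variable {𝕜 : Type*} [Field 𝕜] [LinearOrder 𝕜] [IsStrictOrderedRing 𝕜] {f : 𝕜 → 𝕜}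

theorem ConvexOn.map_add_sub_map_le_of_le {s : Set 𝕜} (hf : ConvexOn 𝕜 s f) {x y c : 𝕜}
    (hx : x ∈ s) (hyc : y + c ∈ s) (hxy : x ≤ y) (hc : 0 ≤ c) :
    f (x + c) - f x ≤ f (y + c) - f y := by
  rcases hc.eq_or_lt with rfl | hc
  · simp
  rcases hxy.eq_or_lt with rfl | hxy
  · rfl
  have hxc : x + c ∈ s := hf.1.ordConnected.out hx hyc ⟨by linarith, by linarith⟩
  have hy : y ∈ s := hf.1.ordConnected.out hx hyc ⟨hxy.le, by linarith⟩
  -- both increments are compared with the slope of the chord from `x` to `y + c`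
  have h1 := hf.secant_mono hx hxc hyc (by linarith) (by linarith) (by linarith)
  have h2 := hf.secant_mono hyc hx hy (by linarith) (by linarith) hxy.le
  rw [add_sub_cancel_left] at h1
  rw [← neg_div_neg_eq, neg_sub, neg_sub, ← neg_div_neg_eq (f y - _), neg_sub, neg_sub,
    add_sub_cancel_left] at h2
  exact (div_le_div_iff_of_pos_right hc).1 (h1.trans h2)

theorem ConvexOn.map_add_sub_map_sub_map_le (hf : ConvexOn 𝕜 (Ici 0) f) {a₁ a₂ b₁ b₂ : 𝕜}
    (ha₂ : 0 ≤ a₂) (hb₂ : 0 ≤ b₂) (ha : a₂ ≤ a₁) (hb : b₂ ≤ b₁) :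
    f (a₂ + b₂) - f a₂ - f b₂ ≤ f (a₁ + b₁) - f a₁ - f b₁ := by
  have ha₁ : 0 ≤ a₁ := ha₂.trans ha
  have hstep_a := hf.map_add_sub_map_le_of_le ha₂ (add_nonneg ha₁ hb₂) ha hb₂
  have hstep_b := hf.map_add_sub_map_le_of_le hb₂ (add_nonneg (hb₂.trans hb) ha₁) hb ha₁
  rw [add_comm b₂, add_comm b₁] at hstep_b
  linarith

theorem ConvexOn.map_add_sub_map_sub_map_nonneg (hf : ConvexOn 𝕜 (Ici 0) f) (hf0 : f 0 ≤ 0)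
    {a b : 𝕜} (ha : 0 ≤ a) (hb : 0 ≤ b) : 0 ≤ f (a + b) - f a - f b := by
  have h := hf.map_add_sub_map_sub_map_le le_rfl hb ha le_rfl
  rw [zero_add] at h
  linarith

end Convex

theorem ConvexOn.sum_Icc_alternating_add_le {f : ℝ → ℝ} (hf : ConvexOn ℝ (Ici 0) f)
    (hf0 : f 0 ≤ 0) {n : ℕ} {a b : ℕ → ℝ}
    (ha_nonneg : ∀ k, 1 ≤ k → k ≤ n → 0 ≤ a k) (hb_nonneg : ∀ k, 1 ≤ k → k ≤ n → 0 ≤ b k)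
    (ha_mono : ∀ k, 1 ≤ k → k < n → a (k + 1) ≤ a k)
    (hb_mono : ∀ k, 1 ≤ k → k < n → b (k + 1) ≤ b k) :
    ∑ k ∈ Icc 1 n, (-1 : ℝ) ^ (k + 1) * f (a k) + ∑ k ∈ Icc 1 n, (-1 : ℝ) ^ (k + 1) * f (b k) ≤
      ∑ k ∈ Icc 1 n, (-1 : ℝ) ^ (k + 1) * f (a k + b k) := by
  have h := sum_Icc_alternating_nonneg (c := fun k ↦ f (a k + b k) - f (a k) - f (b k))
    (fun k h1 h2 ↦ hf.map_add_sub_map_sub_map_nonneg hf0 (ha_nonneg k h1 h2) (hb_nonneg k h1 h2))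
    (fun k h1 h2 ↦ hf.map_add_sub_map_sub_map_le (ha_nonneg (k + 1) (by omega) h2)
      (hb_nonneg (k + 1) (by omega) h2) (ha_mono k h1 h2) (hb_mono k h1 h2))
  simp only [mul_sub, sum_sub_distrib] at h
  linarith

lemma sum_Icc_alternating_rpow_nonneg {n : ℕ} {p : ℝ} (hp : 0 ≤ p) {c : ℕ → ℝ}
    (h0 : ∀ k, 1 ≤ k → k ≤ n → 0 ≤ c k) (hc : ∀ k, 1 ≤ k → k < n → c (k + 1) ≤ c k) :
    0 ≤ ∑ k ∈ Icc 1 n, (-1 : ℝ) ^ (k + 1) * c k ^ p :=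
  sum_Icc_alternating_nonneg (fun k h1 h2 ↦ Real.rpow_nonneg (h0 k h1 h2) p)
    (fun k h1 h2 ↦ Real.rpow_le_rpow (h0 (k + 1) (by omega) h2) (hc k h1 h2) hp)

lemma Real.rpow_add_rpow_le_mul_rpow_add {q x y : ℝ} (hq₀ : 0 ≤ q) (hq₁ : q ≤ 1) (hx : 0 ≤ x)
    (hy : 0 ≤ y) : x ^ q + y ^ q ≤ 2 ^ (1 - q) * (x + y) ^ q := by
  have h := (Real.concaveOn_rpow hq₀ hq₁).2 (mem_Ici.2 hx) (mem_Ici.2 hy)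
    (by norm_num : (0 : ℝ) ≤ 1 / 2) (by norm_num : (0 : ℝ) ≤ 1 / 2) (by norm_num)
  simp only [smul_eq_mul] at h
  rw [← mul_add, ← mul_add, Real.mul_rpow (by norm_num) (by positivity),
    Real.div_rpow zero_le_one zero_le_two, Real.one_rpow] at h
  rw [Real.rpow_sub two_pos, Real.rpow_one]
  field_simp at h ⊢
  linarith

theorem alternating_minkowski_general (n : ℕ) (p : ℝ) (hp : 1 ≤ p)
    (a b : ℕ → ℝ)
    (ha_nonneg : ∀ k, 1 ≤ k → k ≤ n → 0 ≤ a k)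
    (hb_nonneg : ∀ k, 1 ≤ k → k ≤ n → 0 ≤ b k)
    (ha_mono : ∀ k, 1 ≤ k → k < n → a (k + 1) ≤ a k)
    (hb_mono : ∀ k, 1 ≤ k → k < n → b (k + 1) ≤ b k) :
    (∑ k ∈ Finset.Icc 1 n, (-1 : ℝ) ^ (k + 1) * a k ^ p) ^ (1 / p) +
      (∑ k ∈ Finset.Icc 1 n, (-1 : ℝ) ^ (k + 1) * b k ^ p) ^ (1 / p) ≤
    (2 : ℝ) ^ (1 - 1 / p) *
      (∑ k ∈ Finset.Icc 1 n, (-1 : ℝ) ^ (k + 1) * (a k + b k) ^ p) ^ (1 / p) := by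
  have hp₀ : 0 < p := zero_lt_one.trans_le hp
  have hA := sum_Icc_alternating_rpow_nonneg hp₀.le ha_nonneg ha_mono
  have hB := sum_Icc_alternating_rpow_nonneg hp₀.le hb_nonneg hb_mono
  have hAB := (convexOn_rpow hp).sum_Icc_alternating_add_le
    (Real.zero_rpow hp₀.ne').le ha_nonneg hb_nonneg ha_mono hb_mono
  calc _ ≤ (2 : ℝ) ^ (1 - 1 / p) * (_ + _) ^ (1 / p) :=
        Real.rpow_add_rpow_le_mul_rpow_add (by positivity) (div_le_one_of_le₀ hp hp₀.le) hA hB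
    _ ≤ _ := by gcongr

/-- Theorem 2 (right-hand side): Minkowski-type inequality with alternating signs
for `p ≥ 1`, with the sharp constant `2^(1 - 1/p)`. -/
theorem alternating_minkowski (n : ℕ) (hn : 1 ≤ n) (p : ℝ) (hp : 1 ≤ p)
    (a b : ℕ → ℝ)
    (ha_nonneg : ∀ k, 1 ≤ k → k ≤ n → 0 ≤ a k)
    (hb_nonneg : ∀ k, 1 ≤ k → k ≤ n → 0 ≤ b k)
    (ha_mono : ∀ k, 1 ≤ k → k < n → a (k + 1) ≤ a k)
    (hb_mono : ∀ k, 1 ≤ k → k < n → b (k + 1) ≤ b k) :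
    (∑ k ∈ Finset.Icc 1 n, (-1 : ℝ) ^ (k + 1) * a k ^ p) ^ (1 / p) +
      (∑ k ∈ Finset.Icc 1 n, (-1 : ℝ) ^ (k + 1) * b k ^ p) ^ (1 / p) ≤
    (2 : ℝ) ^ (1 - 1 / p) *
      (∑ k ∈ Finset.Icc 1 n, (-1 : ℝ) ^ (k + 1) * (a k + b k) ^ p) ^ (1 / p) :=
  alternating_minkowski_general n p hp a b ha_nonneg hb_nonneg ha_mono hb_mono
end
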